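/- arXiv:2511.19903 — 3 statements merged into one kernel-verified Lean document; each statement's English description precedes it below -/
import Mathlib

section
/- Assume k = −2. Then the canonical Poisson bracket {·,·} and the bracket {·,·}′ are compatible: for all smooth functions f, g, h : ℝⁿ×ℝⁿ → ℝ, {{f,g}′, h} + {{g,h}′, f} + {{h,f}′, g} + {{f,g}, h}′ + {{g,h}, f}′ + {{h,f}, g}′ = 0 at every point of ℝⁿ×ℝⁿ (i.e. the Schouten bracket of the canonical Poisson bivector P with P′ vanishes). -/
open scoped BigOperators

noncomputable section

/-- Phase space `T*ℝⁿ = ℝⁿ × ℝⁿ`, points `x = (q, p)`. -/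
abbrev Phase (n : ℕ) := (Fin n → ℝ) × (Fin n → ℝ)

/-- Partial derivative `∂f/∂qᵢ` of a function on phase space. -/
def dq {n : ℕ} (f : Phase n → ℝ) (i : Fin n) (x : Phase n) : ℝ :=
  fderiv ℝ f x (Pi.single i 1, 0)

/-- Partial derivative `∂f/∂pᵢ` of a function on phase space. -/
def dp {n : ℕ} (f : Phase n → ℝ) (i : Fin n) (x : Phase n) : ℝ :=
  fderiv ℝ f x (0, Pi.single i 1)

/-- Partial derivative `∂V/∂qᵢ` of a potential on configuration space. -/
def dV {n : ℕ} (V : (Fin n → ℝ) → ℝ) (i : Fin n) (q : Fin n → ℝ) : ℝ :=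
  fderiv ℝ V q (Pi.single i 1)

/-- The Hamiltonian `H(q,p) = Σᵢ pᵢ²/(2mᵢ) + V(q)`. -/
def Ham {n : ℕ} (m : Fin n → ℝ) (V : (Fin n → ℝ) → ℝ) (x : Phase n) : ℝ :=
  (∑ i, x.2 i ^ 2 / (2 * m i)) + V x.1

/-- The Hamiltonian vector field `X` acting on functions:
`Xf = Σᵢ (pᵢ/mᵢ) ∂f/∂qᵢ − (∂V/∂qᵢ) ∂f/∂pᵢ`. -/
def Xop {n : ℕ} (m : Fin n → ℝ) (V : (Fin n → ℝ) → ℝ) (f : Phase n → ℝ) (x : Phase n) : ℝ :=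
  ∑ i, (x.2 i / m i * dq f i x - dV V i x.1 * dp f i x)

/-- The canonical Poisson bracket `{f,g} = Σᵢ (∂f/∂qᵢ ∂g/∂pᵢ − ∂f/∂pᵢ ∂g/∂qᵢ)`. -/
def bracketC {n : ℕ} (f g : Phase n → ℝ) (x : Phase n) : ℝ :=
  ∑ i, (dq f i x * dp g i x - dp f i x * dq g i x)

/-- `Aᵢⱼ = pᵢqⱼ/mᵢ − pⱼqᵢ/mⱼ`. -/
def Acoef {n : ℕ} (m : Fin n → ℝ) (i j : Fin n) (x : Phase n) : ℝ :=
  x.2 i * x.1 j / m i - x.2 j * x.1 i / m j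

/-- `Bᵢⱼ = (k/(2mᵢ)) pᵢpⱼ + qᵢ ∂V/∂qⱼ`. -/
def Bcoef {n : ℕ} (m : Fin n → ℝ) (k : ℝ) (V : (Fin n → ℝ) → ℝ) (i j : Fin n)
    (x : Phase n) : ℝ :=
  k / (2 * m i) * (x.2 i * x.2 j) + x.1 i * dV V j x.1

/-- `Cᵢⱼ = (k/2)(pᵢ ∂V/∂qⱼ − pⱼ ∂V/∂qᵢ)`. -/
def Ccoef {n : ℕ} (k : ℝ) (V : (Fin n → ℝ) → ℝ) (i j : Fin n) (x : Phase n) : ℝ :=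
  k / 2 * (x.2 i * dV V j x.1 - x.2 j * dV V i x.1)

/-- The bracket `{f,g}′` associated with the bivector `P′`. -/
def bracketP {n : ℕ} (m : Fin n → ℝ) (k : ℝ) (V : (Fin n → ℝ) → ℝ)
    (f g : Phase n → ℝ) (x : Phase n) : ℝ :=
  ∑ i, ∑ j,
    (Acoef m i j x * (dq f i x * dq g j x)
      + Bcoef m k V i j x * (dq f i x * dp g j x - dp f j x * dq g i x)
      + Ccoef k V i j x * (dp f i x * dp g j x))

section Generic
variable {E : Type*} [NormedAddCommGroup E] [NormedSpace ℝ E]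

lemma contDiff_fderiv_apply {f : E → ℝ} (hf : ContDiff ℝ 2 f) (v : E) :
    ContDiff ℝ 1 (fun x => fderiv ℝ f x v) := by
  have h1 : ContDiff ℝ 1 (fderiv ℝ f) := hf.fderiv_right (by norm_num)
  exact (ContinuousLinearMap.apply ℝ ℝ v).contDiff.comp h1

lemma differentiable_fderiv_apply {f : E → ℝ} (hf : ContDiff ℝ 2 f) (v : E) :
    Differentiable ℝ (fun x => fderiv ℝ f x v) :=
  (contDiff_fderiv_apply hf v).differentiable one_ne_zero

lemma clairaut {f : E → ℝ} (hf : ContDiff ℝ 2 f) (x v w : E) :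
    fderiv ℝ (fun y => fderiv ℝ f y v) x w = fderiv ℝ (fun y => fderiv ℝ f y w) x v := by
  have hd : DifferentiableAt ℝ (fderiv ℝ f) x :=
    ((hf.fderiv_right (by norm_num : (1:WithTop ℕ∞) + 1 ≤ 2)).differentiable one_ne_zero) x
  have key : ∀ u : E, fderiv ℝ (fun y => fderiv ℝ f y u) x =
      (fderiv ℝ (fderiv ℝ f) x).flip u := by
    intro u
    rw [fderiv_clm_apply hd (differentiableAt_const u)]
    simp
  rw [key, key]
  exact hf.contDiffAt.isSymmSndFDerivAt (by norm_num) w v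

end Generic

section DdRules
variable {n : ℕ}

def Dd (f : Phase n → ℝ) (w : Phase n) (x : Phase n) : ℝ := fderiv ℝ f x w
def eQ (i : Fin n) : Phase n := (Pi.single i 1, 0)
def eP (i : Fin n) : Phase n := (0, Pi.single i 1)

lemma dq_eq (f : Phase n → ℝ) (i : Fin n) : dq f i = Dd f (eQ i) := rfl
lemma dp_eq (f : Phase n → ℝ) (i : Fin n) : dp f i = Dd f (eP i) := rfl

lemma Dd_sum {ι : Type*} {s : Finset ι} {u : ι → Phase n → ℝ} {x : Phase n}
    (h : ∀ j ∈ s, DifferentiableAt ℝ (u j) x) (w : Phase n) :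
    Dd (fun y => ∑ j ∈ s, u j y) w x = ∑ j ∈ s, Dd (u j) w x := by
  simp [Dd, fderiv_fun_sum h]

lemma Dd_mul {u v : Phase n → ℝ} {x : Phase n} (hu : DifferentiableAt ℝ u x)
    (hv : DifferentiableAt ℝ v x) (w : Phase n) :
    Dd (fun y => u y * v y) w x = u x * Dd v w x + v x * Dd u w x := by
  simp [Dd, fderiv_fun_mul hu hv]

lemma Dd_sub {u v : Phase n → ℝ} {x : Phase n} (hu : DifferentiableAt ℝ u x)
    (hv : DifferentiableAt ℝ v x) (w : Phase n) :
    Dd (fun y => u y - v y) w x = Dd u w x - Dd v w x := by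
  simp [Dd, fderiv_fun_sub hu hv]

lemma Dd_q (i : Fin n) (w x : Phase n) : Dd (fun y : Phase n => y.1 i) w x = w.1 i := by
  unfold Dd
  rw [show (fun y : Phase n => y.1 i)
      = ⇑((ContinuousLinearMap.proj (R := ℝ) (φ := fun _ : Fin n => ℝ) i).comp
        (ContinuousLinearMap.fst ℝ (Fin n → ℝ) (Fin n → ℝ))) from rfl]
  rw [ContinuousLinearMap.fderiv]
  rfl

lemma Dd_p (i : Fin n) (w x : Phase n) : Dd (fun y : Phase n => y.2 i) w x = w.2 i := by
  unfold Dd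
  rw [show (fun y : Phase n => y.2 i)
      = ⇑((ContinuousLinearMap.proj (R := ℝ) (φ := fun _ : Fin n => ℝ) i).comp
        (ContinuousLinearMap.snd ℝ (Fin n → ℝ) (Fin n → ℝ))) from rfl]
  rw [ContinuousLinearMap.fderiv]
  rfl

lemma Dd_p_div (i : Fin n) (c : ℝ) (w x : Phase n) :
    Dd (fun y : Phase n => y.2 i / c) w x = w.2 i / c := by
  simp only [div_eq_mul_inv]
  have hd : DifferentiableAt ℝ (fun y : Phase n => y.2 i) x :=
    ((ContinuousLinearMap.proj (R := ℝ) (φ := fun _ : Fin n => ℝ) i).comp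
        (ContinuousLinearMap.snd ℝ (Fin n → ℝ) (Fin n → ℝ))).differentiable.differentiableAt
  rw [show Dd (fun y : Phase n => y.2 i * c⁻¹) w x
      = fderiv ℝ (fun y : Phase n => y.2 i * c⁻¹) x w from rfl]
  rw [fderiv_mul_const hd]
  have := Dd_p i w x
  unfold Dd at this
  simp [this, mul_comm]

lemma Dd_fst_comp {g : (Fin n → ℝ) → ℝ} {x : Phase n} (hg : DifferentiableAt ℝ g x.1)
    (w : Phase n) :
    Dd (fun y : Phase n => g y.1) w x = fderiv ℝ g x.1 w.1 := by
  unfold Dd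
  have h : HasFDerivAt (fun y : Phase n => g y.1)
      ((fderiv ℝ g x.1).comp (ContinuousLinearMap.fst ℝ (Fin n → ℝ) (Fin n → ℝ))) x :=
    (hg.hasFDerivAt.comp x hasFDerivAt_fst)
  rw [h.fderiv]
  rfl

end DdRules

section Smooth
variable {n : ℕ}

lemma contDiff_dq {f : Phase n → ℝ} (hf : ContDiff ℝ 2 f) (i : Fin n) :
    ContDiff ℝ 1 (dq f i) := contDiff_fderiv_apply hf _

lemma contDiff_dp {f : Phase n → ℝ} (hf : ContDiff ℝ 2 f) (i : Fin n) :
    ContDiff ℝ 1 (dp f i) := contDiff_fderiv_apply hf _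

lemma differentiable_dq {f : Phase n → ℝ} (hf : ContDiff ℝ 2 f) (i : Fin n) :
    Differentiable ℝ (dq f i) := (contDiff_dq hf i).differentiable one_ne_zero

lemma differentiable_dp {f : Phase n → ℝ} (hf : ContDiff ℝ 2 f) (i : Fin n) :
    Differentiable ℝ (dp f i) := (contDiff_dp hf i).differentiable one_ne_zero

lemma contDiff_q (i : Fin n) : ContDiff ℝ 1 (fun y : Phase n => y.1 i) :=
  ((ContinuousLinearMap.proj (R := ℝ) (φ := fun _ : Fin n => ℝ) i).comp
    (ContinuousLinearMap.fst ℝ (Fin n → ℝ) (Fin n → ℝ))).contDiff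

lemma contDiff_p (i : Fin n) : ContDiff ℝ 1 (fun y : Phase n => y.2 i) :=
  ((ContinuousLinearMap.proj (R := ℝ) (φ := fun _ : Fin n => ℝ) i).comp
    (ContinuousLinearMap.snd ℝ (Fin n → ℝ) (Fin n → ℝ))).contDiff

lemma contDiff_dV_fst {V : (Fin n → ℝ) → ℝ} (hV : ContDiff ℝ 2 V) (i : Fin n) :
    ContDiff ℝ 1 (fun x : Phase n => fderiv ℝ V x.1 (Pi.single i 1)) :=
  (contDiff_fderiv_apply hV _).comp contDiff_fst

end Smooth

section SumHelpers
variable {n : ℕ}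

lemma sum2_congr {a b : Fin n → Fin n → ℝ} (h : ∀ i j, a i j = b i j) :
    ∑ i, ∑ j, a i j = ∑ i, ∑ j, b i j :=
  Finset.sum_congr rfl fun i _ => Finset.sum_congr rfl fun j _ => h i j

lemma sum2_sub {a b : Fin n → Fin n → ℝ} :
    ∑ i, ∑ j, (a i j - b i j) = (∑ i, ∑ j, a i j) - ∑ i, ∑ j, b i j := by
  rw [← Finset.sum_sub_distrib]
  exact Finset.sum_congr rfl fun i _ => Finset.sum_sub_distrib _ _

lemma sum2_swap (a : Fin n → Fin n → ℝ) :
    ∑ i, ∑ j, a i j = ∑ i, ∑ j, a j i := Finset.sum_comm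

end SumHelpers

/-- The scaling vector field `W = Σ qᵢ ∂qᵢ − pᵢ ∂pᵢ` acting on functions. -/
def Wop {n : ℕ} (f : Phase n → ℝ) (x : Phase n) : ℝ :=
  ∑ i, (x.1 i * dq f i x - x.2 i * dp f i x)

section Key1
variable {n : ℕ}

/-- For `k = -2`, the bracket `{f,g}'` factors through the vector fields `X` and `W`. -/
lemma bracketP_factor (m : Fin n → ℝ) (V : (Fin n → ℝ) → ℝ) (u v : Phase n → ℝ)
    (y : Phase n) :
    bracketP m (-2) V u v y = Xop m V u y * Wop v y - Wop u y * Xop m V v y := by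
  calc bracketP m (-2) V u v y
      = ∑ i, ∑ j,
          ((Acoef m i j y * (dq u i y * dq v j y)
            + Bcoef m (-2) V i j y * (dq u i y * dp v j y)
            + Ccoef (-2) V i j y * (dp u i y * dp v j y))
           - Bcoef m (-2) V i j y * (dp u j y * dq v i y)) := by
        unfold bracketP
        exact sum2_congr fun i j => by ring
    _ = (∑ i, ∑ j,
          (Acoef m i j y * (dq u i y * dq v j y)
            + Bcoef m (-2) V i j y * (dq u i y * dp v j y)
            + Ccoef (-2) V i j y * (dp u i y * dp v j y)))
         - ∑ i, ∑ j, Bcoef m (-2) V i j y * (dp u j y * dq v i y) := sum2_sub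
    _ = (∑ i, ∑ j,
          (Acoef m i j y * (dq u i y * dq v j y)
            + Bcoef m (-2) V i j y * (dq u i y * dp v j y)
            + Ccoef (-2) V i j y * (dp u i y * dp v j y)))
         - ∑ i, ∑ j, Bcoef m (-2) V j i y * (dp u i y * dq v j y) := by
        rw [sum2_swap (fun i j => Bcoef m (-2) V i j y * (dp u j y * dq v i y))]
    _ = ∑ i, ∑ j,
          ((y.2 i / m i * dq u i y - dV V i y.1 * dp u i y)
              * (y.1 j * dq v j y - y.2 j * dp v j y)
            - (y.1 i * dq u i y - y.2 i * dp u i y)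
              * (y.2 j / m j * dq v j y - dV V j y.1 * dp v j y)) := by
        rw [← sum2_sub]
        exact sum2_congr fun i j => by
          unfold Acoef Bcoef Ccoef
          ring
    _ = Xop m V u y * Wop v y - Wop u y * Xop m V v y := by
        unfold Xop Wop
        rw [Finset.sum_mul_sum, Finset.sum_mul_sum, ← sum2_sub]

end Key1

section Expand
variable {n : ℕ}

lemma Dd_bracketC {f g : Phase n → ℝ} (hf : ContDiff ℝ 2 f) (hg : ContDiff ℝ 2 g)
    (w x : Phase n) :
    Dd (fun y => bracketC f g y) w x
      = ∑ j, (Dd (dq f j) w x * dp g j x + dq f j x * Dd (dp g j) w x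
          - (Dd (dp f j) w x * dq g j x + dp f j x * Dd (dq g j) w x)) := by
  unfold bracketC
  rw [Dd_sum (u := fun j y => dq f j y * dp g j y - dp f j y * dq g j y)
      (fun j _ => ((differentiable_dq hf j x).mul (differentiable_dp hg j x)).sub
        ((differentiable_dp hf j x).mul (differentiable_dq hg j x))) w]
  refine Finset.sum_congr rfl fun j _ => ?_
  rw [Dd_sub ((differentiable_dq hf j x).fun_mul (differentiable_dp hg j x))
        ((differentiable_dp hf j x).fun_mul (differentiable_dq hg j x)),
      Dd_mul (differentiable_dq hf j x) (differentiable_dp hg j x),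
      Dd_mul (differentiable_dp hf j x) (differentiable_dq hg j x)]
  ring

lemma Dd_Wop {f : Phase n → ℝ} (hf : ContDiff ℝ 2 f) (w x : Phase n) :
    Dd (fun y => Wop f y) w x
      = ∑ i, (w.1 i * dq f i x + x.1 i * Dd (dq f i) w x
          - (w.2 i * dp f i x + x.2 i * Dd (dp f i) w x)) := by
  unfold Wop
  rw [Dd_sum (u := fun i y => y.1 i * dq f i y - y.2 i * dp f i y)
      (fun i _ => (((contDiff_q i).differentiable one_ne_zero x).mul (differentiable_dq hf i x)).sub
        (((contDiff_p i).differentiable one_ne_zero x).mul (differentiable_dp hf i x))) w]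
  refine Finset.sum_congr rfl fun i _ => ?_
  rw [Dd_sub (((contDiff_q i).differentiable one_ne_zero x).fun_mul (differentiable_dq hf i x))
        (((contDiff_p i).differentiable one_ne_zero x).fun_mul (differentiable_dp hf i x)),
      Dd_mul ((contDiff_q i).differentiable one_ne_zero x) (differentiable_dq hf i x),
      Dd_mul ((contDiff_p i).differentiable one_ne_zero x) (differentiable_dp hf i x),
      Dd_q, Dd_p]
  ring

lemma Dd_Xop {m : Fin n → ℝ} {V : (Fin n → ℝ) → ℝ} (hV : ContDiff ℝ 2 V)
    {f : Phase n → ℝ} (hf : ContDiff ℝ 2 f) (w x : Phase n) :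
    Dd (fun y => Xop m V f y) w x
      = ∑ i, (w.2 i / m i * dq f i x + x.2 i / m i * Dd (dq f i) w x
          - (fderiv ℝ (dV V i) x.1 w.1 * dp f i x + dV V i x.1 * Dd (dp f i) w x)) := by
  have hdVd : ∀ i : Fin n, DifferentiableAt ℝ (fun y : Phase n => dV V i y.1) x :=
    fun i => ((contDiff_dV_fst hV i).differentiable one_ne_zero x)
  have hpdiv : ∀ i : Fin n, DifferentiableAt ℝ (fun y : Phase n => y.2 i / m i) x :=
    fun i => by
      simp only [div_eq_mul_inv]
      exact ((contDiff_p i).differentiable one_ne_zero x).mul_const _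
  unfold Xop
  rw [Dd_sum (u := fun i y => y.2 i / m i * dq f i y - dV V i y.1 * dp f i y)
      (fun i _ => by exact ((hpdiv i).mul
          (differentiable_dq hf i x)).sub ((hdVd i).mul (differentiable_dp hf i x))) w]
  refine Finset.sum_congr rfl fun i _ => ?_
  rw [Dd_sub ((hpdiv i).fun_mul
        (differentiable_dq hf i x)) ((hdVd i).fun_mul (differentiable_dp hf i x)),
      Dd_mul (hpdiv i)
        (differentiable_dq hf i x),
      Dd_mul (hdVd i) (differentiable_dp hf i x),
      Dd_p_div,
      Dd_fst_comp (g := dV V i) (differentiable_fderiv_apply hV (Pi.single i 1) x.1) w]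
  ring

lemma bracketC_comb (u v u' v' w : Phase n → ℝ) {x : Phase n}
    (hu : DifferentiableAt ℝ u x) (hv : DifferentiableAt ℝ v x)
    (hu' : DifferentiableAt ℝ u' x) (hv' : DifferentiableAt ℝ v' x) :
    bracketC (fun y => u y * v y - u' y * v' y) w x
      = u x * bracketC v w x + v x * bracketC u w x
        - u' x * bracketC v' w x - v' x * bracketC u' w x := by
  unfold bracketC
  rw [Finset.mul_sum, Finset.mul_sum, Finset.mul_sum, Finset.mul_sum,
      ← Finset.sum_add_distrib, ← Finset.sum_sub_distrib, ← Finset.sum_sub_distrib]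
  refine Finset.sum_congr rfl fun i _ => ?_
  have hq : ∀ j : Fin n, dq (fun y => u y * v y - u' y * v' y) j x
      = u x * dq v j x + v x * dq u j x - (u' x * dq v' j x + v' x * dq u' j x) := by
    intro j
    rw [dq_eq, Dd_sub (hu.fun_mul hv) (hu'.fun_mul hv'), Dd_mul hu hv, Dd_mul hu' hv']
    rfl
  have hp : ∀ j : Fin n, dp (fun y => u y * v y - u' y * v' y) j x
      = u x * dp v j x + v x * dp u j x - (u' x * dp v' j x + v' x * dp u' j x) := by
    intro j
    rw [dp_eq, Dd_sub (hu.fun_mul hv) (hu'.fun_mul hv'), Dd_mul hu hv, Dd_mul hu' hv']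
    rfl
  rw [hq i, hp i]
  ring

lemma differentiable_Wop {f : Phase n → ℝ} (hf : ContDiff ℝ 2 f) :
    Differentiable ℝ (fun x => Wop f x) := by
  unfold Wop
  refine Differentiable.fun_sum fun i _ => ?_
  exact (((contDiff_q i).differentiable one_ne_zero).mul (differentiable_dq hf i)).sub
    (((contDiff_p i).differentiable one_ne_zero).mul (differentiable_dp hf i))

lemma differentiable_Xop {m : Fin n → ℝ} {V : (Fin n → ℝ) → ℝ} (hV : ContDiff ℝ 2 V)
    {f : Phase n → ℝ} (hf : ContDiff ℝ 2 f) :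
    Differentiable ℝ (fun x => Xop m V f x) := by
  have hpdiv : ∀ i : Fin n, Differentiable ℝ (fun y : Phase n => y.2 i / m i) :=
    fun i => by
      simp only [div_eq_mul_inv]
      exact ((contDiff_p i).differentiable one_ne_zero).mul_const _
  have hdVd : ∀ i : Fin n, Differentiable ℝ (fun y : Phase n => dV V i y.1) :=
    fun i => (contDiff_dV_fst hV i).differentiable one_ne_zero
  unfold Xop
  refine Differentiable.fun_sum fun i _ => ?_
  exact ((hpdiv i).mul (differentiable_dq hf i)).sub
    ((hdVd i).mul (differentiable_dp hf i))

end Expand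

section Symm
variable {n : ℕ}

lemma symm_qq {f : Phase n → ℝ} (hf : ContDiff ℝ 2 f) (i j : Fin n) (x : Phase n) :
    Dd (dq f i) (eQ j) x = Dd (dq f j) (eQ i) x := clairaut hf x (eQ i) (eQ j)

lemma symm_qp {f : Phase n → ℝ} (hf : ContDiff ℝ 2 f) (i j : Fin n) (x : Phase n) :
    Dd (dq f i) (eP j) x = Dd (dp f j) (eQ i) x := clairaut hf x (eQ i) (eP j)

lemma symm_pp {f : Phase n → ℝ} (hf : ContDiff ℝ 2 f) (i j : Fin n) (x : Phase n) :
    Dd (dp f i) (eP j) x = Dd (dp f j) (eP i) x := clairaut hf x (eP i) (eP j)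

lemma symm_V {V : (Fin n → ℝ) → ℝ} (hV : ContDiff ℝ 2 V) (q : Fin n → ℝ) (i j : Fin n) :
    fderiv ℝ (dV V i) q (Pi.single j 1) = fderiv ℝ (dV V j) q (Pi.single i 1) :=
  clairaut hV q (Pi.single i 1) (Pi.single j 1)

end Symm

section Invariance
variable {n : ℕ}

/-- The vector field `W` preserves the canonical Poisson bracket. -/
lemma W_invariance {f g : Phase n → ℝ} (hf : ContDiff ℝ 2 f) (hg : ContDiff ℝ 2 g)
    (x : Phase n) :
    Wop (fun y => bracketC f g y) x = bracketC (Wop f) g x - bracketC (Wop g) f x := by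
  have hL : Wop (fun y => bracketC f g y) x
      = ∑ i, ∑ j,
        (x.1 i * (Dd (dq f j) (eQ i) x * dp g j x + dq f j x * Dd (dp g j) (eQ i) x
            - (Dd (dp f j) (eQ i) x * dq g j x + dp f j x * Dd (dq g j) (eQ i) x))
         - x.2 i * (Dd (dq f j) (eP i) x * dp g j x + dq f j x * Dd (dp g j) (eP i) x
            - (Dd (dp f j) (eP i) x * dq g j x + dp f j x * Dd (dq g j) (eP i) x))) := by
    have h0 : Wop (fun y => bracketC f g y) x
        = ∑ i, (x.1 i * Dd (fun y => bracketC f g y) (eQ i) x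
            - x.2 i * Dd (fun y => bracketC f g y) (eP i) x) := rfl
    rw [h0]
    refine Finset.sum_congr rfl fun i _ => ?_
    rw [Dd_bracketC hf hg (eQ i) x, Dd_bracketC hf hg (eP i) x,
        Finset.mul_sum, Finset.mul_sum, ← Finset.sum_sub_distrib]
  have hR1 : bracketC (Wop f) g x
      = ∑ j, ∑ i,
          ((Pi.single (M := fun _ : Fin n => ℝ) j 1 i * dq f i x + x.1 i * Dd (dq f i) (eQ j) x
             - (0 * dp f i x + x.2 i * Dd (dp f i) (eQ j) x)) * dp g j x
           - (0 * dq f i x + x.1 i * Dd (dq f i) (eP j) x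
             - (Pi.single (M := fun _ : Fin n => ℝ) j 1 i * dp f i x + x.2 i * Dd (dp f i) (eP j) x)) * dq g j x) := by
    have h0 : bracketC (Wop f) g x
        = ∑ j, (Dd (fun y => Wop f y) (eQ j) x * dp g j x
            - Dd (fun y => Wop f y) (eP j) x * dq g j x) := rfl
    rw [h0]
    refine Finset.sum_congr rfl fun j _ => ?_
    rw [Dd_Wop hf (eQ j) x, Dd_Wop hf (eP j) x, Finset.sum_mul, Finset.sum_mul,
        ← Finset.sum_sub_distrib]
    rfl
  have hR2 : bracketC (Wop g) f x
      = ∑ j, ∑ i,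
          ((Pi.single (M := fun _ : Fin n => ℝ) j 1 i * dq g i x + x.1 i * Dd (dq g i) (eQ j) x
             - (0 * dp g i x + x.2 i * Dd (dp g i) (eQ j) x)) * dp f j x
           - (0 * dq g i x + x.1 i * Dd (dq g i) (eP j) x
             - (Pi.single (M := fun _ : Fin n => ℝ) j 1 i * dp g i x + x.2 i * Dd (dp g i) (eP j) x)) * dq f j x) := by
    have h0 : bracketC (Wop g) f x
        = ∑ j, (Dd (fun y => Wop g y) (eQ j) x * dp f j x
            - Dd (fun y => Wop g y) (eP j) x * dq f j x) := rfl
    rw [h0]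
    refine Finset.sum_congr rfl fun j _ => ?_
    rw [Dd_Wop hg (eQ j) x, Dd_Wop hg (eP j) x, Finset.sum_mul, Finset.sum_mul,
        ← Finset.sum_sub_distrib]
    rfl
  have hR : bracketC (Wop f) g x - bracketC (Wop g) f x
      = ∑ i, ∑ j,
          (((Pi.single (M := fun _ : Fin n => ℝ) j 1 i * dq f i x + x.1 i * Dd (dq f i) (eQ j) x
             - (0 * dp f i x + x.2 i * Dd (dp f i) (eQ j) x)) * dp g j x
           - (0 * dq f i x + x.1 i * Dd (dq f i) (eP j) x
             - (Pi.single (M := fun _ : Fin n => ℝ) j 1 i * dp f i x + x.2 i * Dd (dp f i) (eP j) x)) * dq g j x)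
          - ((Pi.single (M := fun _ : Fin n => ℝ) j 1 i * dq g i x + x.1 i * Dd (dq g i) (eQ j) x
             - (0 * dp g i x + x.2 i * Dd (dp g i) (eQ j) x)) * dp f j x
           - (0 * dq g i x + x.1 i * Dd (dq g i) (eP j) x
             - (Pi.single (M := fun _ : Fin n => ℝ) j 1 i * dp g i x + x.2 i * Dd (dp g i) (eP j) x)) * dq f j x)) := by
    rw [hR1, hR2, ← sum2_sub]
    exact sum2_swap _
  rw [hL, hR]
  refine sum2_congr fun i j => ?_
  rw [symm_qq hf i j x,
      show Dd (dp f i) (eQ j) x = Dd (dq f j) (eP i) x from (symm_qp hf j i x).symm,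
      symm_qp hf i j x, symm_pp hf i j x,
      symm_qq hg i j x,
      show Dd (dp g i) (eQ j) x = Dd (dq g j) (eP i) x from (symm_qp hg j i x).symm,
      symm_qp hg i j x, symm_pp hg i j x]
  simp only [Pi.single_apply]
  rcases eq_or_ne i j with rfl | hij
  · simp only [if_pos rfl]; ring
  · rw [if_neg hij]; ring

end Invariance

section InvarianceX
variable {n : ℕ}

/-- The Hamiltonian vector field `X` preserves the canonical Poisson bracket. -/
lemma X_invariance {m : Fin n → ℝ} {V : (Fin n → ℝ) → ℝ} (hV : ContDiff ℝ 2 V)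
    {f g : Phase n → ℝ} (hf : ContDiff ℝ 2 f) (hg : ContDiff ℝ 2 g) (x : Phase n) :
    Xop m V (fun y => bracketC f g y) x
      = bracketC (Xop m V f) g x - bracketC (Xop m V g) f x := by
  have hL : Xop m V (fun y => bracketC f g y) x
      = ∑ i, ∑ j,
        (x.2 i / m i * (Dd (dq f j) (eQ i) x * dp g j x + dq f j x * Dd (dp g j) (eQ i) x
            - (Dd (dp f j) (eQ i) x * dq g j x + dp f j x * Dd (dq g j) (eQ i) x))
         - dV V i x.1 * (Dd (dq f j) (eP i) x * dp g j x + dq f j x * Dd (dp g j) (eP i) x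
            - (Dd (dp f j) (eP i) x * dq g j x + dp f j x * Dd (dq g j) (eP i) x))) := by
    have h0 : Xop m V (fun y => bracketC f g y) x
        = ∑ i, (x.2 i / m i * Dd (fun y => bracketC f g y) (eQ i) x
            - dV V i x.1 * Dd (fun y => bracketC f g y) (eP i) x) := rfl
    rw [h0]
    refine Finset.sum_congr rfl fun i _ => ?_
    rw [Dd_bracketC hf hg (eQ i) x, Dd_bracketC hf hg (eP i) x,
        Finset.mul_sum, Finset.mul_sum, ← Finset.sum_sub_distrib]
  have hR1 : bracketC (Xop m V f) g x
      = ∑ j, ∑ i,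
          ((0 / m i * dq f i x + x.2 i / m i * Dd (dq f i) (eQ j) x
             - (fderiv ℝ (dV V i) x.1 (Pi.single j 1) * dp f i x
                + dV V i x.1 * Dd (dp f i) (eQ j) x)) * dp g j x
           - (Pi.single (M := fun _ : Fin n => ℝ) j 1 i / m i * dq f i x
                + x.2 i / m i * Dd (dq f i) (eP j) x
             - (fderiv ℝ (dV V i) x.1 0 * dp f i x
                + dV V i x.1 * Dd (dp f i) (eP j) x)) * dq g j x) := by
    have h0 : bracketC (Xop m V f) g x
        = ∑ j, (Dd (fun y => Xop m V f y) (eQ j) x * dp g j x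
            - Dd (fun y => Xop m V f y) (eP j) x * dq g j x) := rfl
    rw [h0]
    refine Finset.sum_congr rfl fun j _ => ?_
    rw [Dd_Xop hV hf (eQ j) x, Dd_Xop hV hf (eP j) x, Finset.sum_mul, Finset.sum_mul,
        ← Finset.sum_sub_distrib]
    rfl
  have hR2 : bracketC (Xop m V g) f x
      = ∑ j, ∑ i,
          ((0 / m i * dq g i x + x.2 i / m i * Dd (dq g i) (eQ j) x
             - (fderiv ℝ (dV V i) x.1 (Pi.single j 1) * dp g i x
                + dV V i x.1 * Dd (dp g i) (eQ j) x)) * dp f j x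
           - (Pi.single (M := fun _ : Fin n => ℝ) j 1 i / m i * dq g i x
                + x.2 i / m i * Dd (dq g i) (eP j) x
             - (fderiv ℝ (dV V i) x.1 0 * dp g i x
                + dV V i x.1 * Dd (dp g i) (eP j) x)) * dq f j x) := by
    have h0 : bracketC (Xop m V g) f x
        = ∑ j, (Dd (fun y => Xop m V g y) (eQ j) x * dp f j x
            - Dd (fun y => Xop m V g y) (eP j) x * dq f j x) := rfl
    rw [h0]
    refine Finset.sum_congr rfl fun j _ => ?_
    rw [Dd_Xop hV hg (eQ j) x, Dd_Xop hV hg (eP j) x, Finset.sum_mul, Finset.sum_mul,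
        ← Finset.sum_sub_distrib]
    rfl
  have hR : bracketC (Xop m V f) g x - bracketC (Xop m V g) f x
      = ∑ i, ∑ j,
          (((0 / m i * dq f i x + x.2 i / m i * Dd (dq f i) (eQ j) x
             - (fderiv ℝ (dV V i) x.1 (Pi.single j 1) * dp f i x
                + dV V i x.1 * Dd (dp f i) (eQ j) x)) * dp g j x
           - (Pi.single (M := fun _ : Fin n => ℝ) j 1 i / m i * dq f i x
                + x.2 i / m i * Dd (dq f i) (eP j) x
             - (fderiv ℝ (dV V i) x.1 0 * dp f i x
                + dV V i x.1 * Dd (dp f i) (eP j) x)) * dq g j x)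
          - ((0 / m i * dq g i x + x.2 i / m i * Dd (dq g i) (eQ j) x
             - (fderiv ℝ (dV V i) x.1 (Pi.single j 1) * dp g i x
                + dV V i x.1 * Dd (dp g i) (eQ j) x)) * dp f j x
           - (Pi.single (M := fun _ : Fin n => ℝ) j 1 i / m i * dq g i x
                + x.2 i / m i * Dd (dq g i) (eP j) x
             - (fderiv ℝ (dV V i) x.1 0 * dp g i x
                + dV V i x.1 * Dd (dp g i) (eP j) x)) * dq f j x)) := by
    rw [hR1, hR2, ← sum2_sub]
    exact sum2_swap _
  have hE0 : ∑ i, ∑ j, (fderiv ℝ (dV V i) x.1 (Pi.single j 1)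
      * (dp f i x * dp g j x - dp g i x * dp f j x)) = 0 := by
    have h1 := sum2_swap (fun i j => fderiv ℝ (dV V i) x.1 (Pi.single j 1)
      * (dp f i x * dp g j x - dp g i x * dp f j x))
    have h2 : ∑ i, ∑ j, (fderiv ℝ (dV V j) x.1 (Pi.single i 1)
        * (dp f j x * dp g i x - dp g j x * dp f i x))
        = ∑ i, ∑ j, (-(fderiv ℝ (dV V i) x.1 (Pi.single j 1)
          * (dp f i x * dp g j x - dp g i x * dp f j x))) := by
      refine sum2_congr fun i j => ?_
      rw [symm_V hV x.1 j i]
      ring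
    rw [h2] at h1
    simp only [Finset.sum_neg_distrib] at h1
    linarith
  rw [hL, hR, ← sub_eq_zero, ← sum2_sub]
  refine Eq.trans (sum2_congr fun i j => ?_) hE0
  rw [symm_qq hf i j x,
      show Dd (dp f i) (eQ j) x = Dd (dq f j) (eP i) x from (symm_qp hf j i x).symm,
      symm_qp hf i j x, symm_pp hf i j x,
      symm_qq hg i j x,
      show Dd (dp g i) (eQ j) x = Dd (dq g j) (eP i) x from (symm_qp hg j i x).symm,
      symm_qp hg i j x, symm_pp hg i j x]
  simp only [Pi.single_apply, map_zero, zero_div, zero_mul]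
  rcases eq_or_ne i j with rfl | hij
  · simp only [if_pos rfl]; ring
  · rw [if_neg hij]; ring

end InvarianceX


/-- for `k = −2` the canonical bracket `{·,·}` and the bracket `{·,·}′`
are compatible: the mixed Jacobi sum vanishes (the Schouten bracket `[[P,P′]]` is zero). -/
theorem bracketP_compatible_k_neg_two (n : ℕ) (m : Fin n → ℝ) (hm : ∀ i, 0 < m i)
    (V : (Fin n → ℝ) → ℝ) (hV : ContDiff ℝ (⊤ : ℕ∞) V)
    (hEuler : ∀ q : Fin n → ℝ, ∑ i, q i * dV V i q = (-2 : ℝ) * V q)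
    (f g h : Phase n → ℝ) (hf : ContDiff ℝ (⊤ : ℕ∞) f) (hg : ContDiff ℝ (⊤ : ℕ∞) g)
    (hh : ContDiff ℝ (⊤ : ℕ∞) h) :
    ∀ x : Phase n,
      bracketC (fun y => bracketP m (-2) V f g y) h x
        + bracketC (fun y => bracketP m (-2) V g h y) f x
        + bracketC (fun y => bracketP m (-2) V h f y) g x
        + bracketP m (-2) V (fun y => bracketC f g y) h x
        + bracketP m (-2) V (fun y => bracketC g h y) f x
        + bracketP m (-2) V (fun y => bracketC h f y) g x = 0 := by
  intro x
  have hV2 : ContDiff ℝ 2 V := hV.of_le (by norm_cast)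
  have hf2 : ContDiff ℝ 2 f := hf.of_le (by norm_cast)
  have hg2 : ContDiff ℝ 2 g := hg.of_le (by norm_cast)
  have hh2 : ContDiff ℝ 2 h := hh.of_le (by norm_cast)
  have e1 : ∀ u v : Phase n → ℝ, (fun y => bracketP m (-2) V u v y)
      = fun y => Xop m V u y * Wop v y - Wop u y * Xop m V v y :=
    fun u v => funext fun y => bracketP_factor m V u v y
  rw [e1 f g, e1 g h, e1 h f,
      bracketP_factor m V (fun y => bracketC f g y) h x,
      bracketP_factor m V (fun y => bracketC g h y) f x,
      bracketP_factor m V (fun y => bracketC h f y) g x,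
      X_invariance hV2 hf2 hg2 x, W_invariance hf2 hg2 x,
      X_invariance hV2 hg2 hh2 x, W_invariance hg2 hh2 x,
      X_invariance hV2 hh2 hf2 x, W_invariance hh2 hf2 x,
      bracketC_comb (Xop m V f) (Wop g) (Wop f) (Xop m V g) h
        (differentiable_Xop hV2 hf2 x) (differentiable_Wop hg2 x)
        (differentiable_Wop hf2 x) (differentiable_Xop hV2 hg2 x),
      bracketC_comb (Xop m V g) (Wop h) (Wop g) (Xop m V h) f
        (differentiable_Xop hV2 hg2 x) (differentiable_Wop hh2 x)
        (differentiable_Wop hg2 x) (differentiable_Xop hV2 hh2 x),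
      bracketC_comb (Xop m V h) (Wop f) (Wop h) (Xop m V f) g
        (differentiable_Xop hV2 hh2 x) (differentiable_Wop hf2 x)
        (differentiable_Wop hh2 x) (differentiable_Xop hV2 hf2 x)]
  ring
end
end

section
/- For all smooth functions f, g : ℝⁿ×ℝⁿ → ℝ one has X({f,g}⁻) = {Xf, g}⁻ + {f, Xg}⁻ at every point of ℝⁿ×ℝⁿ; that is, the bivector P̄′ defining the bracket {·,·}⁻ is invariant under the phase flow of the Hamiltonian vector field X (its Lie derivative along X vanishes). -/
open scoped BigOperators

noncomputable section

/-- `Āᵢⱼ = aⱼpᵢ/mᵢ − aᵢpⱼ/mⱼ`. -/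
def Abar {n : ℕ} (m a : Fin n → ℝ) (i j : Fin n) (x : Phase n) : ℝ :=
  a j * x.2 i / m i - a i * x.2 j / m j

/-- `B̄ᵢⱼ = (k/(2mᵢ)) pᵢpⱼ + aᵢ ∂U/∂qⱼ`. -/
def Bbar {n : ℕ} (m a : Fin n → ℝ) (k : ℝ) (U : (Fin n → ℝ) → ℝ) (i j : Fin n)
    (x : Phase n) : ℝ :=
  k / (2 * m i) * (x.2 i * x.2 j) + a i * dV U j x.1

/-- `C̄ᵢⱼ = (k/2)(pᵢ ∂U/∂qⱼ − pⱼ ∂U/∂qᵢ)`. -/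
def Cbar {n : ℕ} (k : ℝ) (U : (Fin n → ℝ) → ℝ) (i j : Fin n) (x : Phase n) : ℝ :=
  k / 2 * (x.2 i * dV U j x.1 - x.2 j * dV U i x.1)

/-- The bracket `{f,g}⁻` associated with the bivector `P̄′`. -/
def bracketB {n : ℕ} (m a : Fin n → ℝ) (k : ℝ) (U : (Fin n → ℝ) → ℝ)
    (f g : Phase n → ℝ) (x : Phase n) : ℝ :=
  ∑ i, ∑ j,
    (Abar m a i j x * (dq f i x * dq g j x)
      + Bbar m a k U i j x * (dq f i x * dp g j x - dp f j x * dq g i x)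
      + Cbar k U i j x * (dp f i x * dp g j x))

section AuxBracket

open ContinuousLinearMap

variable {n : ℕ}

/-- Evaluate a continuous linear functional on `Fin n → ℝ` via the standard basis. -/
lemma clm_eval_pi (L : (Fin n → ℝ) →L[ℝ] ℝ) (v : Fin n → ℝ) :
    L v = ∑ j, v j * L (Pi.single j 1) := by
  have hv : v = ∑ j, v j • (Pi.single j 1 : Fin n → ℝ) := by
    funext i
    simp [Finset.sum_apply, Pi.single_apply]
  conv_lhs => rw [hv]
  simp only [map_sum, map_smul, smul_eq_mul]

/-- Evaluate a continuous linear functional on phase space via the standard basis. -/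
lemma clm_eval_phase (L : Phase n →L[ℝ] ℝ) (v w : Fin n → ℝ) :
    L (v, w) = ∑ i, v i * L (Pi.single i 1, 0) + ∑ i, w i * L (0, Pi.single i 1) := by
  have hv : ((v, w) : Phase n)
      = (∑ i, v i • ((Pi.single i 1 : Fin n → ℝ), (0 : Fin n → ℝ)))
        + ∑ i, w i • (((0 : Fin n → ℝ)), (Pi.single i 1 : Fin n → ℝ)) := by
    apply Prod.ext
    · simp only [Prod.fst_add, Prod.fst_sum, Prod.smul_fst, Prod.snd_add]
      funext i
      simp [Finset.sum_apply, Pi.single_apply]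
    · simp only [Prod.snd_add, Prod.snd_sum, Prod.smul_snd]
      funext i
      simp [Finset.sum_apply, Pi.single_apply]
  rw [hv]
  simp only [map_add, map_sum, map_smul, smul_eq_mul]

/-- The Hamiltonian vector field as a vector. -/
def XVec (m : Fin n → ℝ) (U : (Fin n → ℝ) → ℝ) (x : Phase n) : Phase n :=
  (fun i => x.2 i / m i, fun i => -dV U i x.1)

/-- The auxiliary (scaling) vector field as a vector. -/
def ZVec (a : Fin n → ℝ) (k : ℝ) (x : Phase n) : Phase n :=
  (a, fun i => k / 2 * x.2 i)

/-- Auxiliary first-order operator `Zf = Σᵢ aᵢ ∂f/∂qᵢ + (k/2) pᵢ ∂f/∂pᵢ`. -/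
def Zop (a : Fin n → ℝ) (k : ℝ) (f : Phase n → ℝ) (x : Phase n) : ℝ :=
  ∑ i, (a i * dq f i x + k / 2 * x.2 i * dp f i x)

lemma Xop_eq (m : Fin n → ℝ) (U : (Fin n → ℝ) → ℝ) (f : Phase n → ℝ) (x : Phase n) :
    Xop m U f x = fderiv ℝ f x (XVec m U x) := by
  unfold Xop XVec
  rw [clm_eval_phase, ← Finset.sum_add_distrib]
  exact Finset.sum_congr rfl fun i _ => by rw [dq, dp]; try ring

lemma Zop_eq (a : Fin n → ℝ) (k : ℝ) (f : Phase n → ℝ) (x : Phase n) :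
    Zop a k f x = fderiv ℝ f x (ZVec a k x) := by
  unfold Zop ZVec
  rw [clm_eval_phase, ← Finset.sum_add_distrib]
  exact Finset.sum_congr rfl fun i _ => by rw [dq, dp]; try ring

/-- The bracket factorizes: `{f,g}⁻ = Xf·Zg − Zf·Xg`. -/
lemma bracketB_eq (m a : Fin n → ℝ) (k : ℝ) (U : (Fin n → ℝ) → ℝ)
    (f g : Phase n → ℝ) (x : Phase n) :
    bracketB m a k U f g x
      = Xop m U f x * Zop a k g x - Zop a k f x * Xop m U g x := by
  have key : ∑ i, ∑ j, Bbar m a k U i j x * (dp f j x * dq g i x)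
      = ∑ i, ∑ j, Bbar m a k U j i x * (dp f i x * dq g j x) := Finset.sum_comm
  have h1 : bracketB m a k U f g x
      = (∑ i, ∑ j, (Abar m a i j x * (dq f i x * dq g j x)
            + Bbar m a k U i j x * (dq f i x * dp g j x)
            + Cbar k U i j x * (dp f i x * dp g j x)))
        - ∑ i, ∑ j, Bbar m a k U i j x * (dp f j x * dq g i x) := by
    simp only [bracketB]
    rw [← Finset.sum_sub_distrib]
    refine Finset.sum_congr rfl fun i _ => ?_
    rw [← Finset.sum_sub_distrib]
    exact Finset.sum_congr rfl fun j _ => by ring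
  have h2 : Xop m U f x * Zop a k g x - Zop a k f x * Xop m U g x
      = ∑ i, ∑ j, ((x.2 i / m i * dq f i x - dV U i x.1 * dp f i x)
          * (a j * dq g j x + k / 2 * x.2 j * dp g j x)
          - (a i * dq f i x + k / 2 * x.2 i * dp f i x)
            * (x.2 j / m j * dq g j x - dV U j x.1 * dp g j x)) := by
    simp only [Xop, Zop]
    rw [Finset.sum_mul_sum, Finset.sum_mul_sum, ← Finset.sum_sub_distrib]
    exact Finset.sum_congr rfl fun i _ => (Finset.sum_sub_distrib _ _).symm
  rw [h1, key, h2, ← Finset.sum_sub_distrib]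
  refine Finset.sum_congr rfl fun i _ => ?_
  rw [← Finset.sum_sub_distrib]
  refine Finset.sum_congr rfl fun j _ => ?_
  simp only [Abar, Bbar, Cbar]
  ring

lemma dV_contDiff {U : (Fin n → ℝ) → ℝ} (hU : ContDiff ℝ (⊤ : ℕ∞) U) (i : Fin n) :
    ContDiff ℝ (⊤ : ℕ∞) (fun q => dV U i q) := by
  simp only [dV]
  exact (hU.fderiv_right (by simp)).clm_apply contDiff_const

lemma XVec_contDiff {m : Fin n → ℝ} {U : (Fin n → ℝ) → ℝ} (hU : ContDiff ℝ (⊤ : ℕ∞) U) :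
    ContDiff ℝ (⊤ : ℕ∞) (XVec m U) := by
  unfold XVec
  apply ContDiff.prodMk
  · exact contDiff_pi.2 fun i =>
      (((ContinuousLinearMap.proj i).comp
        (ContinuousLinearMap.snd ℝ (Fin n → ℝ) (Fin n → ℝ))).contDiff).div_const _
  · exact contDiff_pi.2 fun i => ((dV_contDiff hU i).comp contDiff_fst).neg

lemma ZVec_contDiff {a : Fin n → ℝ} {k : ℝ} : ContDiff ℝ (⊤ : ℕ∞) (ZVec a k) := by
  unfold ZVec
  apply ContDiff.prodMk contDiff_const
  exact contDiff_pi.2 fun i => contDiff_const.mul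
    (((ContinuousLinearMap.proj i).comp
      (ContinuousLinearMap.snd ℝ (Fin n → ℝ) (Fin n → ℝ))).contDiff)

lemma Xop_contDiff {m : Fin n → ℝ} {U : (Fin n → ℝ) → ℝ} (hU : ContDiff ℝ (⊤ : ℕ∞) U)
    {f : Phase n → ℝ} (hf : ContDiff ℝ (⊤ : ℕ∞) f) : ContDiff ℝ (⊤ : ℕ∞) (Xop m U f) := by
  have : Xop m U f = fun y => fderiv ℝ f y (XVec m U y) := funext fun y => Xop_eq m U f y
  rw [this]
  exact (hf.fderiv_right (by simp)).clm_apply (XVec_contDiff hU)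

lemma Zop_contDiff {a : Fin n → ℝ} {k : ℝ} {f : Phase n → ℝ} (hf : ContDiff ℝ (⊤ : ℕ∞) f) :
    ContDiff ℝ (⊤ : ℕ∞) (Zop a k f) := by
  have : Zop a k f = fun y => fderiv ℝ f y (ZVec a k y) := funext fun y => Zop_eq a k f y
  rw [this]
  exact (hf.fderiv_right (by simp)).clm_apply ZVec_contDiff

lemma Xop_sub {m : Fin n → ℝ} {U : (Fin n → ℝ) → ℝ} {u v : Phase n → ℝ} {x : Phase n}
    (hu : DifferentiableAt ℝ u x) (hv : DifferentiableAt ℝ v x) :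
    Xop m U (fun y => u y - v y) x = Xop m U u x - Xop m U v x := by
  rw [Xop_eq, Xop_eq, Xop_eq, fderiv_fun_sub hu hv]
  simp

lemma Xop_mul {m : Fin n → ℝ} {U : (Fin n → ℝ) → ℝ} {u v : Phase n → ℝ} {x : Phase n}
    (hu : DifferentiableAt ℝ u x) (hv : DifferentiableAt ℝ v x) :
    Xop m U (fun y => u y * v y) x = Xop m U u x * v x + u x * Xop m U v x := by
  rw [Xop_eq, Xop_eq, Xop_eq, fderiv_fun_mul hu hv]
  simp [smul_eq_mul]
  ring

/-- Differentiated Euler identity: `∇(dV U i)·a = k · dV U i`. -/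
lemma euler_deriv {a : Fin n → ℝ} {k : ℝ} {U : (Fin n → ℝ) → ℝ} (hU : ContDiff ℝ (⊤ : ℕ∞) U)
    (hEuler : ∀ q, ∑ i, a i * dV U i q = k * U q) (i : Fin n) (q : Fin n → ℝ) :
    fderiv ℝ (fun q' => dV U i q') q a = k * dV U i q := by
  have hU1 : Differentiable ℝ U := hU.differentiable (by simp)
  have hU2 : ContDiff ℝ (⊤ : ℕ∞) (fderiv ℝ U) := hU.fderiv_right (by simp)
  have hdV : ∀ j : Fin n, DifferentiableAt ℝ (fun q' => dV U j q') q := fun j => by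
    simp only [dV]
    exact (hU2.differentiable (by simp) q).clm_apply (differentiableAt_const _)
  have stepa : ∀ (j : Fin n) (v : Fin n → ℝ), fderiv ℝ (fun q' => dV U j q') q v
      = fderiv ℝ (fderiv ℝ U) q v (Pi.single j 1) := by
    intro j v
    have h := fderiv_clm_apply (hU2.differentiable (by simp) q)
      (differentiableAt_const (Pi.single j 1 : Fin n → ℝ))
    simp only [dV]
    rw [h]
    simp
  have hsymm := ((hU.contDiffAt : ContDiffAt ℝ (⊤ : ℕ∞) U q).isSymmSndFDerivAt (by simp; exact WithTop.coe_le_coe.2 le_top)).eq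
  have hde : ∀ v : Fin n → ℝ,
      ∑ j, a j * fderiv ℝ (fun q' => dV U j q') q v = k * fderiv ℝ U q v := by
    intro v
    have hfun : (fun q' => ∑ j, a j * dV U j q') = fun q' => k * U q' := funext hEuler
    have h1 : fderiv ℝ (fun q' => ∑ j, a j * dV U j q') q
        = fderiv ℝ (fun q' => k * U q') q := by rw [hfun]
    rw [fderiv_fun_sum (fun j _ => (hdV j).const_mul (a j)),
      fderiv_const_mul (hU1.differentiableAt) k] at h1
    have h2 := congrArg (fun L : (Fin n → ℝ) →L[ℝ] ℝ => L v) h1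
    simpa [smul_eq_mul, fderiv_const_mul (hdV _)] using h2
  calc fderiv ℝ (fun q' => dV U i q') q a
      = fderiv ℝ (fderiv ℝ U) q a (Pi.single i 1) := stepa i a
    _ = fderiv ℝ (fderiv ℝ U) q (Pi.single i 1) a := hsymm a (Pi.single i 1)
    _ = ∑ j, a j * fderiv ℝ (fderiv ℝ U) q (Pi.single i 1) (Pi.single j 1) :=
        clm_eval_pi _ a
    _ = ∑ j, a j * fderiv ℝ (fun q' => dV U j q') q (Pi.single i 1) := by
        exact Finset.sum_congr rfl fun j _ => by rw [stepa j (Pi.single i 1)]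
    _ = k * fderiv ℝ U q (Pi.single i 1) := hde (Pi.single i 1)
    _ = k * dV U i q := by rw [dV]

set_option maxHeartbeats 1000000 in
/-- The commutator identity `X(Zh) = Z(Xh) − (k/2)·Xh`. -/
lemma XZcommutator {m a : Fin n → ℝ} {k : ℝ} {U : (Fin n → ℝ) → ℝ} (hU : ContDiff ℝ (⊤ : ℕ∞) U)
    (hEuler : ∀ q, ∑ i, a i * dV U i q = k * U q)
    {h : Phase n → ℝ} (hh : ContDiff ℝ (⊤ : ℕ∞) h) (x : Phase n) :
    Xop m U (Zop a k h) x = Zop a k (Xop m U h) x - k / 2 * Xop m U h x := by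
  have hh2 : ContDiff ℝ (⊤ : ℕ∞) (fderiv ℝ h) := hh.fderiv_right (by simp)
  have hhd : Differentiable ℝ (fderiv ℝ h) := hh2.differentiable (by simp)
  have eZ : Zop a k h = fun y => fderiv ℝ h y (ZVec a k y) := funext fun y => Zop_eq a k h y
  have eX : Xop m U h = fun y => fderiv ℝ h y (XVec m U y) := funext fun y => Xop_eq m U h y
  -- derivative of ZVec
  set Lz : Phase n →L[ℝ] Phase n :=
    (0 : Phase n →L[ℝ] (Fin n → ℝ)).prod
      (ContinuousLinearMap.pi fun i => (k / 2) •
        ((ContinuousLinearMap.proj i).comp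
          (ContinuousLinearMap.snd ℝ (Fin n → ℝ) (Fin n → ℝ)))) with hLz
  have hZd : HasFDerivAt (ZVec a k) Lz x := by
    apply HasFDerivAt.prodMk
    · exact hasFDerivAt_const a x
    · exact hasFDerivAt_pi.2 fun i =>
        (((ContinuousLinearMap.proj i).comp
          (ContinuousLinearMap.snd ℝ (Fin n → ℝ) (Fin n → ℝ))).hasFDerivAt).const_mul (k / 2)
  -- derivative of XVec
  set Lx : Phase n →L[ℝ] Phase n :=
    (ContinuousLinearMap.pi fun i => (m i)⁻¹ •
        ((ContinuousLinearMap.proj i).comp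
          (ContinuousLinearMap.snd ℝ (Fin n → ℝ) (Fin n → ℝ)))).prod
      (ContinuousLinearMap.pi fun i =>
        -((fderiv ℝ (fun q => dV U i q) x.1).comp
            (ContinuousLinearMap.fst ℝ (Fin n → ℝ) (Fin n → ℝ)))) with hLx
  have hXd : HasFDerivAt (XVec m U) Lx x := by
    apply HasFDerivAt.prodMk
    · apply hasFDerivAt_pi.2
      intro i
      have heq : (fun y : Phase n => y.2 i / m i) = fun y : Phase n => (m i)⁻¹ * y.2 i := by
        funext y; rw [div_eq_inv_mul]
      show HasFDerivAt (fun y : Phase n => y.2 i / m i) _ x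
      rw [heq]
      exact (((ContinuousLinearMap.proj i).comp
        (ContinuousLinearMap.snd ℝ (Fin n → ℝ) (Fin n → ℝ))).hasFDerivAt).const_mul (m i)⁻¹
    · apply hasFDerivAt_pi.2
      intro i
      have hd : DifferentiableAt ℝ (fun q => dV U i q) x.1 :=
        ((dV_contDiff hU i).differentiable (by simp)) x.1
      exact ((hd.hasFDerivAt.comp x (hasFDerivAt_fst))).neg
  have hc : HasFDerivAt (fderiv ℝ h) (fderiv ℝ (fderiv ℝ h) x) x := (hhd x).hasFDerivAt
  have e1 : fderiv ℝ (fun y => fderiv ℝ h y (ZVec a k y)) x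
      = (fderiv ℝ h x).comp Lz + (fderiv ℝ (fderiv ℝ h) x).flip (ZVec a k x) :=
    (hc.clm_apply hZd).fderiv
  have e2 : fderiv ℝ (fun y => fderiv ℝ h y (XVec m U y)) x
      = (fderiv ℝ h x).comp Lx + (fderiv ℝ (fderiv ℝ h) x).flip (XVec m U x) :=
    (hc.clm_apply hXd).fderiv
  rw [eZ, eX, Xop_eq, Zop_eq, e1, e2]
  simp only [ContinuousLinearMap.add_apply, ContinuousLinearMap.comp_apply,
    ContinuousLinearMap.flip_apply]
  have hsymm := ((hh.contDiffAt : ContDiffAt ℝ (⊤ : ℕ∞) h x).isSymmSndFDerivAt (by simp; exact WithTop.coe_le_coe.2 le_top)).eq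
  rw [hsymm (XVec m U x) (ZVec a k x)]
  have hvec : Lz (XVec m U x) = Lx (ZVec a k x) + (-(k / 2)) • XVec m U x := by
    have hE : ∀ i : Fin n, fderiv ℝ (fun q => dV U i q) x.1 a = k * dV U i x.1 :=
      fun i => euler_deriv hU hEuler i x.1
    apply Prod.ext
    · funext i
      simp only [hLz, hLx, ContinuousLinearMap.prod_apply, ContinuousLinearMap.pi_apply,
        ContinuousLinearMap.smul_apply, ContinuousLinearMap.comp_apply,
        ContinuousLinearMap.coe_snd', ContinuousLinearMap.coe_fst',
        ContinuousLinearMap.proj_apply, ContinuousLinearMap.zero_apply,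
        ContinuousLinearMap.neg_apply, Prod.fst_add, Prod.smul_fst,
        Pi.add_apply, Pi.smul_apply, Pi.sub_apply, Pi.neg_apply, Pi.zero_apply, XVec, ZVec, smul_eq_mul]
      ring
    · funext i
      simp only [hLz, hLx, ContinuousLinearMap.prod_apply, ContinuousLinearMap.pi_apply,
        ContinuousLinearMap.smul_apply, ContinuousLinearMap.comp_apply,
        ContinuousLinearMap.coe_snd', ContinuousLinearMap.coe_fst',
        ContinuousLinearMap.proj_apply, ContinuousLinearMap.zero_apply,
        ContinuousLinearMap.neg_apply, Prod.snd_add, Prod.smul_snd,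
        Pi.add_apply, Pi.smul_apply, Pi.sub_apply, Pi.neg_apply, Pi.zero_apply, XVec, ZVec, smul_eq_mul]
      rw [hE i]
      ring
  rw [hvec, map_add, map_smul, smul_eq_mul]
  ring

end AuxBracket

/-- invariance of the bivector `P̄′` under the phase flow of `X`:
`X({f,g}⁻) = {Xf,g}⁻ + {f,Xg}⁻` for all smooth `f, g`. -/
theorem bracketB_invariant (n : ℕ) (m : Fin n → ℝ) (hm : ∀ i, 0 < m i)
    (a : Fin n → ℝ) (k : ℝ)
    (U : (Fin n → ℝ) → ℝ) (hU : ContDiff ℝ (⊤ : ℕ∞) U)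
    (hEuler : ∀ q : Fin n → ℝ, ∑ i, a i * dV U i q = k * U q)
    (f g : Phase n → ℝ) (hf : ContDiff ℝ (⊤ : ℕ∞) f) (hg : ContDiff ℝ (⊤ : ℕ∞) g) :
    ∀ x : Phase n,
      Xop m U (bracketB m a k U f g) x
        = bracketB m a k U (fun y => Xop m U f y) g x
          + bracketB m a k U f (fun y => Xop m U g y) x := by
  intro x
  have hdXf : Differentiable ℝ (Xop m U f) := (Xop_contDiff hU hf).differentiable (by simp)
  have hdXg : Differentiable ℝ (Xop m U g) := (Xop_contDiff hU hg).differentiable (by simp)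
  have hdZf : Differentiable ℝ (Zop a k f) := (Zop_contDiff hf).differentiable (by simp)
  have hdZg : Differentiable ℝ (Zop a k g) := (Zop_contDiff hg).differentiable (by simp)
  have key : bracketB m a k U f g
      = fun y => Xop m U f y * Zop a k g y - Zop a k f y * Xop m U g y :=
    funext fun y => bracketB_eq m a k U f g y
  have e0 : Xop m U (bracketB m a k U f g) x
      = Xop m U (fun y => Xop m U f y * Zop a k g y) x
        - Xop m U (fun y => Zop a k f y * Xop m U g y) x := by
    rw [key]
    exact Xop_sub ((hdXf x).mul (hdZg x)) ((hdZf x).mul (hdXg x))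
  have e1 : Xop m U (fun y => Xop m U f y * Zop a k g y) x
      = Xop m U (Xop m U f) x * Zop a k g x + Xop m U f x * Xop m U (Zop a k g) x :=
    Xop_mul (hdXf x) (hdZg x)
  have e2 : Xop m U (fun y => Zop a k f y * Xop m U g y) x
      = Xop m U (Zop a k f) x * Xop m U g x + Zop a k f x * Xop m U (Xop m U g) x :=
    Xop_mul (hdZf x) (hdXg x)
  have c1 : Xop m U (Zop a k g) x = Zop a k (Xop m U g) x - k / 2 * Xop m U g x :=
    XZcommutator hU hEuler hg x
  have c2 : Xop m U (Zop a k f) x = Zop a k (Xop m U f) x - k / 2 * Xop m U f x :=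
    XZcommutator hU hEuler hf x
  have r1 : bracketB m a k U (fun y => Xop m U f y) g x
      = Xop m U (Xop m U f) x * Zop a k g x - Zop a k (Xop m U f) x * Xop m U g x :=
    bracketB_eq m a k U (fun y => Xop m U f y) g x
  have r2 : bracketB m a k U f (fun y => Xop m U g y) x
      = Xop m U f x * Zop a k (Xop m U g) x - Zop a k f x * Xop m U (Xop m U g) x :=
    bracketB_eq m a k U f (fun y => Xop m U g y) x
  rw [e0, e1, e2, c1, c2, r1, r2]
  ring
end
end

section
/- For every smooth function f : ℝⁿ×ℝⁿ → ℝ one has {f, H}⁻ = k·H·{f, H} at every point of ℝⁿ×ℝⁿ; that is, the bivector P̄′ defining {·,·}⁻ satisfies P̄′dH = k·H·P dH, where P is the canonical Poisson bivector. -/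
open scoped BigOperators

noncomputable section

lemma hasFDerivAt_Ham {n : ℕ} (m : Fin n → ℝ) (U : (Fin n → ℝ) → ℝ)
    (hU : ContDiff ℝ (⊤ : ℕ∞) U) (x : Phase n) :
    HasFDerivAt (Ham m U)
      ((∑ i : Fin n, (2 * m i)⁻¹ •
          (x.2 i • ((ContinuousLinearMap.proj i).comp
              (ContinuousLinearMap.snd ℝ (Fin n → ℝ) (Fin n → ℝ)))
            + x.2 i • ((ContinuousLinearMap.proj i).comp
              (ContinuousLinearMap.snd ℝ (Fin n → ℝ) (Fin n → ℝ)))))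
        + (fderiv ℝ U x.1).comp (ContinuousLinearMap.fst ℝ (Fin n → ℝ) (Fin n → ℝ))) x := by
  have hU' : HasFDerivAt U (fderiv ℝ U x.1) x.1 :=
    (hU.differentiable (by simp) x.1).hasFDerivAt
  have h1 : HasFDerivAt (fun y : Phase n => U y.1)
      ((fderiv ℝ U x.1).comp (ContinuousLinearMap.fst ℝ (Fin n → ℝ) (Fin n → ℝ))) x :=
    hU'.comp x ((ContinuousLinearMap.fst ℝ (Fin n → ℝ) (Fin n → ℝ)).hasFDerivAt)
  have h2 : HasFDerivAt (fun y : Phase n => ∑ i, y.2 i ^ 2 / (2 * m i))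
      (∑ i : Fin n, (2 * m i)⁻¹ •
          (x.2 i • ((ContinuousLinearMap.proj i).comp
              (ContinuousLinearMap.snd ℝ (Fin n → ℝ) (Fin n → ℝ)))
            + x.2 i • ((ContinuousLinearMap.proj i).comp
              (ContinuousLinearMap.snd ℝ (Fin n → ℝ) (Fin n → ℝ))))) x := by
    apply HasFDerivAt.fun_sum
    intro i _
    have hpi : HasFDerivAt (fun y : Phase n => y.2 i)
        ((ContinuousLinearMap.proj i).comp
          (ContinuousLinearMap.snd ℝ (Fin n → ℝ) (Fin n → ℝ))) x :=
      ((ContinuousLinearMap.proj i).comp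
          (ContinuousLinearMap.snd ℝ (Fin n → ℝ) (Fin n → ℝ))).hasFDerivAt
    have heq : (fun y : Phase n => y.2 i ^ 2 / (2 * m i))
        = fun y : Phase n => (y.2 i * y.2 i) * (2 * m i)⁻¹ := by
      funext y; ring
    rw [heq]
    exact (hpi.mul hpi).mul_const ((2 * m i)⁻¹)
  exact h2.add h1

lemma dqHam {n : ℕ} (m : Fin n → ℝ) (U : (Fin n → ℝ) → ℝ)
    (hU : ContDiff ℝ (⊤ : ℕ∞) U) (i : Fin n) (x : Phase n) :
    dq (Ham m U) i x = dV U i x.1 := by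
  rw [dq, (hasFDerivAt_Ham m U hU x).fderiv]
  simp [dV]

lemma dpHam {n : ℕ} (m : Fin n → ℝ) (hm : ∀ i, 0 < m i) (U : (Fin n → ℝ) → ℝ)
    (hU : ContDiff ℝ (⊤ : ℕ∞) U) (i : Fin n) (x : Phase n) :
    dp (Ham m U) i x = x.2 i / m i := by
  rw [dp, (hasFDerivAt_Ham m U hU x).fderiv]
  have := (hm i).ne'
  simp [Pi.single_apply, Finset.sum_add_distrib, Finset.sum_ite_eq']
  field_simp
  ring

lemma sum_symmetrize {n : ℕ} (F G : Fin n → Fin n → ℝ)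
    (h : ∀ i j, F i j + F j i = G i j + G j i) :
    ∑ i, ∑ j, F i j = ∑ i, ∑ j, G i j := by
  have key : ∀ (F : Fin n → Fin n → ℝ),
      (∑ i, ∑ j, F i j) + (∑ i, ∑ j, F i j) = ∑ i, ∑ j, (F i j + F j i) := by
    intro F
    nth_rewrite 2 [Finset.sum_comm]
    rw [← Finset.sum_add_distrib]
    exact Finset.sum_congr rfl fun i _ => (Finset.sum_add_distrib).symm
  have hFG : (∑ i, ∑ j, (F i j + F j i)) = ∑ i, ∑ j, (G i j + G j i) :=
    Finset.sum_congr rfl fun i _ => Finset.sum_congr rfl fun j _ => h i j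
  have h1 := key F
  have h2 := key G
  linarith

/-- `{f,H}⁻ = k·H·{f,H}` for every smooth `f`; i.e. the bivector `P̄′`
satisfies `P̄′dH = k·H·P dH` with `P` the canonical Poisson bivector. -/
theorem bracketB_apply_H (n : ℕ) (m : Fin n → ℝ) (hm : ∀ i, 0 < m i)
    (a : Fin n → ℝ) (k : ℝ)
    (U : (Fin n → ℝ) → ℝ) (hU : ContDiff ℝ (⊤ : ℕ∞) U)
    (hEuler : ∀ q : Fin n → ℝ, ∑ i, a i * dV U i q = k * U q)
    (f : Phase n → ℝ) (hf : ContDiff ℝ (⊤ : ℕ∞) f) :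
    ∀ x : Phase n,
      bracketB m a k U f (Ham m U) x = k * Ham m U x * bracketC f (Ham m U) x := by
  intro x
  have hq : ∀ i, dq (Ham m U) i x = dV U i x.1 := fun i => dqHam m U hU i x
  have hp : ∀ i, dp (Ham m U) i x = x.2 i / m i := fun i => dpHam m hm U hU i x
  simp only [bracketB, bracketC, Ham, Abar, Bbar, Cbar, hq, hp]
  have hRHS : k * ((∑ i, x.2 i ^ 2 / (2 * m i)) + U x.1) *
      (∑ i, (dq f i x * (x.2 i / m i) - dp f i x * dV U i x.1))
      = ∑ i, ∑ j,
          (k * (x.2 j ^ 2 / (2 * m j)) *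
            (dq f i x * (x.2 i / m i) - dp f i x * dV U i x.1)
          + a j * dV U j x.1 *
            (dq f i x * (x.2 i / m i) - dp f i x * dV U i x.1)) := by
    rw [Finset.mul_sum]
    apply Finset.sum_congr rfl
    intro i _
    rw [Finset.sum_add_distrib, ← Finset.sum_mul, ← Finset.sum_mul, hEuler x.1,
      ← Finset.mul_sum]
    ring
  rw [hRHS]
  apply sum_symmetrize
  intro i j
  have hi := (hm i).ne'
  have hj := (hm j).ne'
  field_simp
  ring
end
end
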